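/- Let G = G(p,q,A) and suppose the commutator subgroup C of G contains no non-scalar matrix. Then q = p and C = {ηI : η^p = 1}. -/

import Mathlib

/-!
The commutator `⁅S, A⁆` is a scalar `η • 1`, and comparing the entries `(j + 1, j)` of
`S * A = η • (A * S)` gives `ω j = η * ω (j + 1)`. Going once around the cycle yields
`η ^ p = 1`, raising to the `q`-th power yields `η ^ q = 1`, and `η ≠ 1` because `ω` is not
constant; so `η` has order `p = q`. Commutators have determinant `1`, so a scalar `ζ • 1` in the
commutator subgroup satisfies `ζ ^ p = 1`; conversely such a `ζ` is a power `η ^ k`, and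
`ζ • 1 = ⁅S, A⁆ ^ k`.
-/

open Matrix

def Matrix.cyclicShift (n : ℕ) [NeZero n] (R : Type*) [Zero R] [One R] :
    Matrix (Fin n) (Fin n) R :=
  of fun i j => if i = j + 1 then 1 else 0

section CyclicShift

variable {n : ℕ} [NeZero n] {R : Type*}

theorem Matrix.cyclicShift_mul_diagonal_apply [Semiring R] (ω : Fin n → R) (j : Fin n) :
    (cyclicShift n R * diagonal ω) (j + 1) j = ω j := by
  simp [cyclicShift, mul_diagonal]

theorem Matrix.diagonal_mul_cyclicShift_apply [Semiring R] (ω : Fin n → R) (j : Fin n) :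
    (diagonal ω * cyclicShift n R) (j + 1) j = ω (j + 1) := by
  simp [cyclicShift, diagonal_mul]

theorem Matrix.eq_mul_succ_of_cyclicShift_mul_diagonal_eq_smul [Semiring R] {ω : Fin n → R}
    {η : R} (h : cyclicShift n R * diagonal ω = η • (diagonal ω * cyclicShift n R))
    (j : Fin n) :
    ω j = η * ω (j + 1) := by
  simpa only [cyclicShift_mul_diagonal_apply, diagonal_mul_cyclicShift_apply, Matrix.smul_apply,
    smul_eq_mul] using congrFun (congrFun h (j + 1)) j

end CyclicShift

section ShiftRecurrence

open Fin.NatCast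

variable {n : ℕ} [NeZero n] {M : Type*} {ω : Fin n → M} {η : M}

theorem Fin.eq_pow_mul_add_of_forall_eq_mul_succ [Monoid M] (h : ∀ j, ω j = η * ω (j + 1))
    (k : ℕ) (j : Fin n) :
    ω j = η ^ k * ω (j + k) := by
  induction k with
  | zero => simp
  | succ k ih =>
    rw [ih, h (j + k), pow_succ, mul_assoc, Nat.cast_succ, add_assoc]

theorem Fin.pow_eq_one_of_forall_eq_mul_succ [MonoidWithZero M] [IsRightCancelMulZero M]
    (h : ∀ j, ω j = η * ω (j + 1)) {j : Fin n} (hj : ω j ≠ 0) : η ^ n = 1 := by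
  have := Fin.eq_pow_mul_add_of_forall_eq_mul_succ h n j
  rw [Fin.natCast_self, add_zero] at this
  exact (mul_eq_right₀ hj).mp this.symm

theorem Fin.apply_eq_apply_of_forall_eq_succ (h : ∀ j, ω j = ω (j + 1)) (i j : Fin n) :
    ω i = ω j := by
  have key (k : ℕ) : ω i = ω (i + k) := by
    induction k with
    | zero => simp
    | succ k ih => rw [ih, h, Nat.cast_succ, add_assoc]
  simpa using key (j - i : Fin n)

end ShiftRecurrence

section Commutator

open scoped commutatorElement

theorem Unitary.coe_mul_eq_smul_of_commutator_eq_smul {R A : Type*} [Monoid A] [StarMul A]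
    [SMul R A] [IsScalarTower R A A] {U V : unitary A} {η : R}
    (h : ((⁅U, V⁆ : unitary A) : A) = η • 1) : (U * V : A) = η • (V * U : A) := by
  have hUV : U * V = ⁅U, V⁆ * (V * U) := by rw [commutatorElement_def]; group
  rw [← smul_one_mul, ← h]
  exact congrArg Subtype.val hUV

theorem Matrix.UnitaryGroup.det_eq_one_of_mem_commutator {n α : Type*} [Fintype n]
    [DecidableEq n] [CommRing α] [StarRing α] {Y : unitaryGroup n α}
    (hY : Y ∈ commutator (unitaryGroup n α)) : (Y : Matrix n n α).det = 1 := by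
  simpa using congrArg Units.val
    (Abelianization.commutator_subset_ker
      ((Units.map (detMonoidHom : Matrix n n α →* α)).comp Unitary.toUnits) hY)

theorem Matrix.UnitaryGroup.pow_card_eq_one_of_mem_commutator {n α : Type*} [Fintype n]
    [DecidableEq n] [CommRing α] [StarRing α] {Y : unitaryGroup n α}
    (hY : Y ∈ commutator (unitaryGroup n α)) {η : α} (hη : (Y : Matrix n n α) = η • 1) :
    η ^ Fintype.card n = 1 := by
  simpa [hη, det_smul] using Matrix.UnitaryGroup.det_eq_one_of_mem_commutator hY

end Commutator

theorem Matrix.UnitaryGroup.mem_of_coe_eq_smul_one_of_isPrimitiveRoot {n α : Type*} [Fintype n]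
    [DecidableEq n] [CommRing α] [IsDomain α] [StarRing α] {H : Subgroup (unitaryGroup n α)}
    {X : unitaryGroup n α} (hX : X ∈ H) {η : α} (hXη : (X : Matrix n n α) = η • 1)
    {k : ℕ} [NeZero k] (hη : IsPrimitiveRoot η k) {Y : unitaryGroup n α} {ζ : α}
    (hζ : ζ ^ k = 1) (hYζ : (Y : Matrix n n α) = ζ • 1) : Y ∈ H := by
  obtain ⟨i, -, rfl⟩ := hη.eq_pow_of_pow_eq_one hζ
  have hY : Y = X ^ i := Subtype.ext <| by
    rw [hYζ, SubmonoidClass.coe_pow, hXη, smul_pow, one_pow]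
  exact hY ▸ pow_mem hX i

/-- If the commutator subgroup `C` of `G = G(p,q,A)` contains no non-scalar matrix, then
`q = p` and `C = {η I : η ^ p = 1}`. -/
theorem stmt16 (p q : ℕ) [NeZero p] (hp : p.Prime) (hq : q.Prime)
    (SU AU : Matrix.unitaryGroup (Fin p) ℂ)
    (hS : (SU : Matrix (Fin p) (Fin p) ℂ)
      = Matrix.of fun i j : Fin p => if i = j + 1 then (1 : ℂ) else 0)
    (ω : Fin p → ℂ) (hA : (AU : Matrix (Fin p) (Fin p) ℂ) = Matrix.diagonal ω)
    (hω : ∀ i, ω i ^ q = 1) (hns : ∃ i j, ω i ≠ ω j)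
    (G : Subgroup (Matrix.unitaryGroup (Fin p) ℂ)) (hG : G = Subgroup.closure {SU, AU})
    (hsc : ∀ X ∈ ⁅G, G⁆, ∃ η : ℂ,
      (X : Matrix (Fin p) (Fin p) ℂ) = η • (1 : Matrix (Fin p) (Fin p) ℂ)) :
    q = p ∧ ∀ X : Matrix.unitaryGroup (Fin p) ℂ,
      X ∈ ⁅G, G⁆ ↔ ∃ η : ℂ, η ^ p = 1 ∧
        (X : Matrix (Fin p) (Fin p) ℂ) = η • (1 : Matrix (Fin p) (Fin p) ℂ) := by
  have hSG : SU ∈ G := hG ▸ Subgroup.subset_closure (by simp)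
  have hAG : AU ∈ G := hG ▸ Subgroup.subset_closure (by simp)
  open scoped commutatorElement in
  have hSA := Subgroup.commutator_mem_commutator hSG hAG
  obtain ⟨η, hη⟩ := hsc _ hSA
  have hSA_mul := Unitary.coe_mul_eq_smul_of_commutator_eq_smul hη
  rw [hS, hA] at hSA_mul
  have hrec : ∀ j, ω j = η * ω (j + 1) :=
    eq_mul_succ_of_cyclicShift_mul_diagonal_eq_smul hSA_mul
  have hω0 : ω 0 ≠ 0 := fun h => by simpa [h, hq.ne_zero] using hω 0
  have hη1 : η ≠ 1 := by
    rintro rfl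
    obtain ⟨i, j, hij⟩ := hns
    exact hij (Fin.apply_eq_apply_of_forall_eq_succ (by simpa using hrec) i j)
  have hηq : η ^ q = 1 := by
    simpa only [hrec 0, mul_pow, hω, mul_one] using hω 0
  have : Fact p.Prime := ⟨hp⟩
  have : Fact q.Prime := ⟨hq⟩
  have hηp : orderOf η = p :=
    orderOf_eq_prime (Fin.pow_eq_one_of_forall_eq_mul_succ hrec hω0) hη1
  refine ⟨(orderOf_eq_prime hηq hη1).symm.trans hηp, fun X => ⟨fun hX => ?_, ?_⟩⟩
  · obtain ⟨ζ, hζ⟩ := hsc X hX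
    refine ⟨ζ, ?_, hζ⟩
    simpa using UnitaryGroup.pow_card_eq_one_of_mem_commutator
      (Subgroup.commutator_mono le_top le_top hX) hζ
  · rintro ⟨ζ, hζp, hζ⟩
    exact UnitaryGroup.mem_of_coe_eq_smul_one_of_isPrimitiveRoot hSA hη
      (hηp ▸ IsPrimitiveRoot.orderOf η) hζp hζ
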